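/- arXiv:1701.00470 — 5 statements merged into one kernel-verified Lean document; each statement's English description precedes it below -/
import Mathlib

section
/- Let 1 ≤ ℓ ≤ r be integers, let X be a set, and let F ⊆ P(X^r) be a family of subsets of X^r. If VC_ℓ(F) = d < ∞, then there exist constants C = C(d) and ε = ε(d) > 0 such that for all m ∈ ℕ, π_ℓ(F, m) ≤ C·2^{m^{ℓ-ε}}. -/
/-!
Fix a box `A₁ ⋯ A_ℓ` of height `m`. If `F` shatters a subset `t` of the box, it shatters every
sub-box of `t`, so `t` contains no sub-box of height `d + 1`. Read as an `ℓ`-partite `ℓ`-uniform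
hypergraph, such a `t` has at most `c m^(ℓ-δ)` edges: this is the Kővári–Sós–Turán argument, by
induction on `ℓ`, double counting the pairs (edge-prefix `b`, `(d+1)`-set `T` of last coordinates
all completing `b`) and bounding `∑_b C(deg b, d+1)` from below by Jensen. By Pajor's form of the
Sauer–Shelah lemma the number of traces is at most the number of shattered subsets, hence at most
`(m^ℓ + 1)^(c m^(ℓ-δ))`, which is `O(2^(m^(ℓ-δ/2)))` since `log (m^ℓ + 1) = o(m^(δ/2))`.
-/

open FirstOrder Set Function Filter

universe u v w

namespace PaperVC

/-- `𝔸` is an `(ℓ,t)`-box of height `m` in `X`: it is a concatenation product `A₁ ⋯ A_ℓ` of sets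
`A_i ⊆ X^{k_i}` (`k_i ≥ 1`, `k₁+⋯+k_ℓ = t`); the fibers of a monotone surjection
`c : Fin t → Fin ℓ` encode the consecutive blocks of coordinates, and each `A_i` has size `m`.
By convention a `(0,t)`-box with `t ≥ 1` is a singleton, and a `(0,0)`-box is the empty set. -/
def IsBoxOfHeight (X : Type*) (ℓ t m : ℕ) (𝔸 : Set (Fin t → X)) : Prop :=
  (ℓ = 0 ∧ t = 0 ∧ 𝔸 = ∅) ∨
  (ℓ = 0 ∧ 0 < t ∧ ∃ b, 𝔸 = {b}) ∨
  (0 < ℓ ∧ ∃ c : Fin t → Fin ℓ, Monotone c ∧ Function.Surjective c ∧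
    ∃ A : (i : Fin ℓ) → Set ({j : Fin t // c j = i} → X),
      (∀ i, (A i).Finite ∧ (A i).ncard = m) ∧
      𝔸 = { b | ∀ i, (fun j : {j : Fin t // c j = i} => b j.1) ∈ A i })

/-- The underlying set of a set of tuples: the set of all coordinates of its tuples. -/
def underlying {X : Type*} {t : ℕ} (𝔹 : Set (Fin t → X)) : Set X :=
  { x | ∃ b ∈ 𝔹, ∃ j, b j = x }

/-- A family `F` of subsets of `Y` shatters `A ⊆ Y` if every subset of `A` is cut out by a
member of `F`. -/
def Shatters {Y : Type*} (F : Set (Set Y)) (A : Set Y) : Prop :=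
  ∀ B ⊆ A, ∃ S ∈ F, S ∩ A = B

/-- `VC_ℓ(F)` for a family `F` of subsets of `X^r`, as an extended natural number:
the supremum of the heights of `(ℓ,r)`-boxes in `X` shattered by `F`. -/
noncomputable def VCell (X : Type*) (ℓ r : ℕ) (F : Set (Set (Fin r → X))) : ℕ∞ :=
  sSup { N : ℕ∞ | ∃ m : ℕ, N = (m : ℕ∞) ∧
    ∃ 𝔸 : Set (Fin r → X), IsBoxOfHeight X ℓ r m 𝔸 ∧ Shatters F 𝔸 }

open Finset Real Asymptotics
open Fintype (piFinset)
open scoped Nat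

def GridFree {ℓ : ℕ} {γ : Fin ℓ → Type*} (n : ℕ) (D : Finset (∀ i, γ i)) : Prop :=
  ∀ S : ∀ i, Finset (γ i), (∀ i, #(S i) = n) → ¬ piFinset S ⊆ D

lemma GridFree.eq_empty_of_fin_zero {γ : Fin 0 → Type*} {n : ℕ} {D : Finset (∀ i, γ i)}
    (hD : GridFree n D) : D = ∅ := by
  rw [Finset.eq_empty_iff_forall_notMem]
  intro f hf
  refine hD (fun _ => ∅) (fun i => i.elim0) fun g _ => ?_
  rwa [Subsingleton.elim g f]

lemma card_piFinset_le_pow {ℓ m : ℕ} {γ : Fin ℓ → Type*} {A : ∀ i, Finset (γ i)}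
    (hA : ∀ i, #(A i) ≤ m) : #(piFinset A) ≤ m ^ ℓ := by
  rw [Fintype.card_piFinset]
  exact (prod_le_prod' fun i _ => hA i).trans_eq (by simp)

lemma sum_card_filter_forall_eq_sum_choose {ι κ : Type*} (B : Finset ι) (s : Finset κ)
    (r : ι → κ → Prop) [∀ b a, Decidable (r b a)] (n : ℕ) :
    ∑ T ∈ s.powersetCard n, #{b ∈ B | ∀ a ∈ T, r b a} =
      ∑ b ∈ B, (#{a ∈ s | r b a}).choose n := by
  rw [sum_congr rfl fun T _ => card_filter _ _, sum_comm]
  refine sum_congr rfl fun b _ => ?_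
  rw [← card_filter, ← card_powersetCard]
  congr 1
  ext T
  simp only [mem_filter, Finset.mem_powersetCard, subset_iff]
  aesop

lemma card_mul_pow_le_factorial_mul_sum_choose {ι : Type*} (B : Finset ι) (f : ι → ℕ) {n : ℕ}
    (hn : n ≠ 0) (h : 2 * n * #B ≤ ∑ b ∈ B, f b) :
    (#B : ℝ) * ((∑ b ∈ B, (f b : ℝ)) / (2 * #B)) ^ n ≤ n ! * ∑ b ∈ B, ((f b).choose n : ℝ) := by
  rcases B.eq_empty_or_nonempty with rfl | hB
  · simp
  have hM : (0 : ℝ) < #B := by exact_mod_cast hB.card_pos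
  set x := (∑ b ∈ B, (f b : ℝ)) / #B with hx
  have hxn : 2 * n ≤ x := by
    rw [hx, le_div_iff₀ hM]
    exact_mod_cast h
  have hjensen := descPochhammer_eval_div_factorial_le_sum_choose hn f (fun _ => (#B : ℝ)⁻¹)
    (fun _ _ => by positivity) (by simp [hM.ne'])
    (by rw [← mul_sum, ← div_eq_inv_mul]; linarith)
  rw [← mul_sum, ← mul_sum, inv_mul_eq_div, ← hx, inv_mul_eq_div,
    div_le_div_iff₀ (by positivity) hM] at hjensen
  have hlower : (x / 2) ^ n ≤ (descPochhammer ℝ n).eval x := by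
    rw [descPochhammer_eval_eq_prod_range, pow_eq_prod_const]
    refine prod_le_prod (fun _ _ => by positivity) fun k hk => ?_
    have : (k : ℝ) ≤ n := by exact_mod_cast (mem_range.1 hk).le
    linarith
  calc (#B : ℝ) * ((∑ b ∈ B, (f b : ℝ)) / (2 * #B)) ^ n = #B * (x / 2) ^ n := by
        rw [hx, div_div, mul_comm (#B : ℝ) 2]
    _ ≤ #B * (descPochhammer ℝ n).eval x := by gcongr
    _ ≤ n ! * ∑ b ∈ B, ((f b).choose n : ℝ) := by linarith

lemma le_rpow_inv_mul_rpow_of_pow_le {E K x a : ℝ} {n : ℕ} (hn : n ≠ 0) (hE : 0 ≤ E) (hK : 0 ≤ K)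
    (hx : 0 ≤ x) (h : E ^ n ≤ K * x ^ (n * a)) : E ≤ K ^ (n⁻¹ : ℝ) * x ^ a := by
  have hn' : (n : ℝ) ≠ 0 := by exact_mod_cast hn
  calc E = (E ^ n) ^ (n⁻¹ : ℝ) := (pow_rpow_inv_natCast hE hn).symm
    _ ≤ (K * x ^ (n * a)) ^ (n⁻¹ : ℝ) := by gcongr
    _ = K ^ (n⁻¹ : ℝ) * x ^ a := by
      rw [mul_rpow hK (by positivity), ← rpow_mul hx, mul_comm (n : ℝ), mul_inv_cancel_right₀ hn']

lemma le_of_card_mul_pow_le {E M m c δ : ℝ} {n ℓ : ℕ} (hn : n ≠ 0) (hE : 0 ≤ E) (hM : 0 < M)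
    (hMm : M ≤ m ^ ℓ) (hm : 0 < m) (hc : 0 ≤ c)
    (h : M * (E / (2 * M)) ^ n ≤ m ^ n * (c * m ^ ((ℓ : ℝ) - δ))) :
    E ≤ (2 ^ n * c) ^ (n⁻¹ : ℝ) * m ^ ((ℓ + 1 : ℝ) - δ / n) := by
  refine le_rpow_inv_mul_rpow_of_pow_le hn hE (by positivity) hm.le ?_
  obtain ⟨k, rfl⟩ := Nat.exists_eq_succ_of_ne_zero hn
  have hexp : m ^ ((k + 1 : ℕ) * ((ℓ + 1 : ℝ) - δ / (k + 1 : ℕ))) =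
      (m ^ ℓ) ^ k * m ^ (k + 1) * m ^ ((ℓ : ℝ) - δ) := by
    rw [← pow_mul, ← rpow_natCast, ← rpow_natCast m (k + 1), ← rpow_add hm, ← rpow_add hm]
    congr 1
    push_cast
    field_simp
    ring
  calc E ^ (k + 1) = 2 ^ (k + 1) * M ^ k * (M * (E / (2 * M)) ^ (k + 1)) := by
        rw [div_pow, mul_pow]
        field_simp
        ring
    _ ≤ 2 ^ (k + 1) * (m ^ ℓ) ^ k * (m ^ (k + 1) * (c * m ^ ((ℓ : ℝ) - δ))) := by gcongr
    _ = 2 ^ (k + 1) * c * m ^ ((k + 1 : ℕ) * ((ℓ + 1 : ℝ) - δ / (k + 1 : ℕ))) := by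
        rw [hexp]
        ring

section Snoc

variable {ℓ : ℕ} {γ : Fin (ℓ + 1) → Type*} [∀ i, DecidableEq (γ i)]

lemma GridFree.filter_forall_snoc_mem {n : ℕ} {D : Finset (∀ i, γ i)} (hD : GridFree n D)
    {T : Finset (γ (Fin.last ℓ))} (hT : #T = n) (B : Finset (∀ i : Fin ℓ, γ i.castSucc)) :
    GridFree n {b ∈ B | ∀ a ∈ T, (Fin.snoc b a : ∀ i, γ i) ∈ D} := by
  intro S hS hSD
  refine hD (Fin.snoc S T) (Fin.lastCases (by simpa) (by simpa)) fun f hf => ?_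
  rw [Fin.mem_piFinset_iff_last_init, Fin.init_snoc, Fin.snoc_last] at hf
  rw [← Fin.snoc_init_self f]
  exact (mem_filter.1 (hSD hf.2)).2 _ hf.1

lemma card_eq_sum_card_snoc_mem {A : ∀ i, Finset (γ i)} {D : Finset (∀ i, γ i)}
    (hD : D ⊆ piFinset A) :
    #D = ∑ b ∈ piFinset (Fin.init A), #{a ∈ A (Fin.last ℓ) | (Fin.snoc b a : ∀ i, γ i) ∈ D} := by
  have hinit : ∀ f ∈ D, Fin.init f ∈ piFinset (Fin.init A) := fun f hf =>
    (Fin.mem_piFinset_iff_last_init.1 (hD hf)).2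
  rw [card_eq_sum_card_fiberwise hinit]
  refine sum_congr rfl fun b _ => card_bij' (fun f _ => f (Fin.last ℓ)) (fun a _ => Fin.snoc b a)
    ?_ ?_ ?_ ?_
  · intro f hf
    obtain ⟨hfD, rfl⟩ := mem_filter.1 hf
    exact mem_filter.2 ⟨(Fin.mem_piFinset_iff_last_init.1 (hD hfD)).1, by rwa [Fin.snoc_init_self]⟩
  · intro a ha
    exact mem_filter.2 ⟨(mem_filter.1 ha).2, Fin.init_snoc _ _⟩
  · intro f hf
    rw [← (mem_filter.1 hf).2, Fin.snoc_init_self]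
  · intro a _
    exact Fin.snoc_last _ _

lemma factorial_mul_sum_choose_le_of_gridFree {n m : ℕ} {c δ : ℝ} (hc : 0 ≤ c)
    {A : ∀ i, Finset (γ i)} (hA : ∀ i, #(A i) ≤ m)
    (ih : ∀ D' ⊆ piFinset (Fin.init A), GridFree n D' → (#D' : ℝ) ≤ c * m ^ ((ℓ : ℝ) - δ))
    {D : Finset (∀ i, γ i)} (hD : GridFree n D) :
    (n ! : ℝ) * ∑ b ∈ piFinset (Fin.init A),
        ((#{a ∈ A (Fin.last ℓ) | (Fin.snoc b a : ∀ i, γ i) ∈ D}).choose n : ℝ) ≤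
      m ^ n * (c * m ^ ((ℓ : ℝ) - δ)) := by
  set B := piFinset (Fin.init A)
  have hlink := sum_card_filter_forall_eq_sum_choose B (A (Fin.last ℓ))
    (fun b a => (Fin.snoc b a : ∀ i, γ i) ∈ D) n
  have hfact : (n ! * (#(A (Fin.last ℓ))).choose n : ℝ) ≤ m ^ n := by
    rw [← Nat.cast_mul, ← Nat.descFactorial_eq_factorial_mul_choose]
    exact_mod_cast (Nat.descFactorial_le_pow _ _).trans (Nat.pow_le_pow_left (hA _) n)
  calc (n ! : ℝ) * ∑ b ∈ B, ((#{a ∈ A (Fin.last ℓ) | (Fin.snoc b a : ∀ i, γ i) ∈ D}).choose n : ℝ)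
      = n ! * ∑ T ∈ (A (Fin.last ℓ)).powersetCard n,
          (#{b ∈ B | ∀ a ∈ T, (Fin.snoc b a : ∀ i, γ i) ∈ D} : ℝ) := by
        exact_mod_cast congrArg (n ! * ·) hlink.symm
    _ ≤ n ! * ∑ _T ∈ (A (Fin.last ℓ)).powersetCard n, c * m ^ ((ℓ : ℝ) - δ) := by
        gcongr with T hT
        exact ih _ (filter_subset _ _)
          (hD.filter_forall_snoc_mem (Finset.mem_powersetCard.1 hT).2 B)
    _ ≤ m ^ n * (c * m ^ ((ℓ : ℝ) - δ)) := by
        rw [sum_const, card_powersetCard, nsmul_eq_mul, ← mul_assoc]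
        gcongr

lemma card_le_of_gridFree_succ {n m : ℕ} (hn : n ≠ 0) {c δ : ℝ}
    (hc : 0 ≤ c) (hδ : δ / n ≤ 1) {A : ∀ i, Finset (γ i)} (hA : ∀ i, #(A i) ≤ m)
    (ih : ∀ D' ⊆ piFinset (Fin.init A), GridFree n D' → (#D' : ℝ) ≤ c * m ^ ((ℓ : ℝ) - δ))
    {D : Finset (∀ i, γ i)} (hDA : D ⊆ piFinset A) (hD : GridFree n D) :
    (#D : ℝ) ≤ max (2 * n : ℝ) ((2 ^ n * c) ^ (n⁻¹ : ℝ)) * m ^ ((ℓ + 1 : ℝ) - δ / n) := by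
  set B := piFinset (Fin.init A)
  set deg : (∀ i : Fin ℓ, γ i.castSucc) → ℕ :=
    fun b => #{a ∈ A (Fin.last ℓ) | (Fin.snoc b a : ∀ i, γ i) ∈ D}
  have hE : #D = ∑ b ∈ B, deg b := card_eq_sum_card_snoc_mem hDA
  have hdeg : ∀ b, deg b ≤ m := fun b => (card_filter_le _ _).trans (hA _)
  have hBm : #B ≤ m ^ ℓ := card_piFinset_le_pow fun i => hA i.castSucc
  have hchoose := factorial_mul_sum_choose_le_of_gridFree hc hA ih hD
  rcases Nat.eq_zero_or_pos #D with hD0 | hDpos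
  · rw [hD0, Nat.cast_zero]
    positivity
  have hDBm : #D ≤ #B * m := by
    rw [hE]
    exact sum_le_card_nsmul _ _ _ fun b _ => hdeg b
  obtain ⟨hBpos, hmpos⟩ := CanonicallyOrderedAdd.mul_pos.1 (hDpos.trans_le hDBm)
  have hm : (1 : ℝ) ≤ m := by exact_mod_cast hmpos
  -- Jensen only helps once the average degree `#D / #B` is at least `2n`
  by_cases hlarge : 2 * n * #B ≤ #D
  · have hjensen := card_mul_pow_le_factorial_mul_sum_choose B deg hn (hE ▸ hlarge)
    rw [← Nat.cast_sum, ← hE] at hjensen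
    calc (#D : ℝ) ≤ (2 ^ n * c) ^ (n⁻¹ : ℝ) * m ^ ((ℓ + 1 : ℝ) - δ / n) :=
          le_of_card_mul_pow_le hn (by positivity) (by positivity) (by exact_mod_cast hBm)
            (by positivity) hc (hjensen.trans hchoose)
      _ ≤ _ := by gcongr; exact le_max_right _ _
  · calc (#D : ℝ) ≤ 2 * n * (m : ℝ) ^ (ℓ : ℝ) := by
          rw [rpow_natCast]
          exact_mod_cast (not_le.1 hlarge).le.trans (Nat.mul_le_mul_left _ hBm)
      _ ≤ max (2 * n : ℝ) ((2 ^ n * c) ^ (n⁻¹ : ℝ)) * m ^ ((ℓ + 1 : ℝ) - δ / n) := by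
          gcongr
          · exact le_max_left _ _
          · linarith

end Snoc

theorem exists_card_le_of_gridFree {n : ℕ} (hn : n ≠ 0) (ℓ : ℕ) :
    ∃ c δ : ℝ, 0 ≤ c ∧ 0 < δ ∧ δ ≤ 1 ∧
      ∀ (γ : Fin ℓ → Type u) (A : ∀ i, Finset (γ i)) (m : ℕ), (∀ i, #(A i) ≤ m) →
        ∀ D ⊆ piFinset A, GridFree n D → (#D : ℝ) ≤ c * (m : ℝ) ^ ((ℓ : ℝ) - δ) := by
  induction ℓ with
  | zero =>
    exact ⟨0, 1, le_rfl, one_pos, le_rfl, fun γ A m _ D _ hD => by simp [hD.eq_empty_of_fin_zero]⟩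
  | succ ℓ ih =>
    obtain ⟨c, δ, hc, hδ0, hδ1, ih⟩ := ih
    have hδn : δ / n ≤ 1 :=
      div_le_one_of_le₀ (hδ1.trans (by exact_mod_cast Nat.one_le_iff_ne_zero.2 hn)) n.cast_nonneg
    refine ⟨max (2 * n : ℝ) ((2 ^ n * c) ^ (n⁻¹ : ℝ)), δ / n, le_max_of_le_left (by positivity),
      by positivity, hδn, fun γ A m hA D hDA hD => ?_⟩
    push_cast
    classical
    exact card_le_of_gridFree_succ hn hc hδn hA (ih _ (Fin.init A) m fun i => hA _) hDA hD

lemma isBigO_log_pow_add_one (ℓ : ℕ) :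
    (fun x : ℝ => log (x ^ ℓ + 1)) =O[atTop] log := by
  refine IsBigO.of_bound (ℓ + 1) ?_
  filter_upwards [eventually_ge_atTop 2] with x hx
  have hx1 : 1 ≤ x ^ ℓ := one_le_pow₀ (by linarith)
  rw [norm_of_nonneg (log_nonneg (by linarith)), norm_of_nonneg (log_nonneg (by linarith)),
    ← Nat.cast_succ, ← log_pow]
  refine log_le_log (by positivity) ?_
  rw [pow_succ]
  nlinarith

lemma exists_pow_add_one_rpow_le_mul_two_rpow (ℓ : ℕ) (c : ℝ) {δ : ℝ} (hδ : 0 < δ) :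
    ∃ C : ℝ, ∀ m : ℕ, ((m : ℝ) ^ ℓ + 1) ^ (c * (m : ℝ) ^ ((ℓ : ℝ) - δ)) ≤
      C * 2 ^ ((m : ℝ) ^ ((ℓ : ℝ) - δ / 2)) := by
  have hlo : (fun x : ℝ => c * x ^ ((ℓ : ℝ) - δ) * log (x ^ ℓ + 1)) =o[atTop]
      fun x => x ^ ((ℓ : ℝ) - δ / 2) := by
    refine (((isBigO_refl _ _).const_mul_left c).mul_isLittleO
      ((isBigO_log_pow_add_one ℓ).trans_isLittleO (isLittleO_log_rpow_atTop (half_pos hδ)))).congr'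
      EventuallyEq.rfl ?_
    filter_upwards [eventually_gt_atTop 0] with x hx
    rw [← rpow_add hx]
    ring_nf
  have hev : ∀ᶠ m : ℕ in atTop, ((m : ℝ) ^ ℓ + 1) ^ (c * (m : ℝ) ^ ((ℓ : ℝ) - δ)) ≤
      2 ^ ((m : ℝ) ^ ((ℓ : ℝ) - δ / 2)) := by
    filter_upwards [tendsto_natCast_atTop_atTop.eventually (hlo.bound (log_pos one_lt_two))]
      with m hm
    replace hm := (le_norm_self _).trans hm
    rw [norm_of_nonneg (rpow_nonneg m.cast_nonneg _)] at hm
    rw [rpow_def_of_pos (by positivity), rpow_def_of_pos two_pos, exp_le_exp]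
    linarith
  have hO : (fun m : ℕ => ((m : ℝ) ^ ℓ + 1) ^ (c * (m : ℝ) ^ ((ℓ : ℝ) - δ))) =O[atTop]
      fun m : ℕ => (2 : ℝ) ^ ((m : ℝ) ^ ((ℓ : ℝ) - δ / 2)) :=
    IsBigO.of_bound 1 <| hev.mono fun m hm => by
      rwa [norm_of_nonneg (by positivity), norm_of_nonneg (by positivity), one_mul]
  obtain ⟨C, hC⟩ := (isBigO_nat_atTop_iff fun m h => absurd h (by positivity)).1 hO
  refine ⟨C, fun m => (le_norm_self _).trans ((hC m).trans_eq ?_)⟩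
  rw [norm_of_nonneg (by positivity)]

lemma Shatters.mono {Y : Type*} {F : Set (Set Y)} {A B : Set Y} (h : Shatters F A) (hBA : B ⊆ A) :
    Shatters F B := fun C hC => by
  obtain ⟨S, hSF, hSA⟩ := h C (hC.trans hBA)
  refine ⟨S, hSF, ?_⟩
  rw [← Set.inter_eq_right.2 hBA, ← Set.inter_assoc, hSA, Set.inter_eq_left.2 hC]

lemma card_powerset_filter_card_le_le_pow {α : Type*} (s : Finset α) (K : ℕ) :
    #{t ∈ s.powerset | #t ≤ K} ≤ (#s + 1) ^ K := by
  classical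
  calc #{t ∈ s.powerset | #t ≤ K} ≤ #((range (K + 1)).biUnion s.powersetCard) := by
        refine card_le_card fun t ht => ?_
        rw [mem_filter, Finset.mem_powerset] at ht
        exact mem_biUnion.2
          ⟨#t, mem_range.2 (Nat.lt_succ_of_le ht.2), Finset.mem_powersetCard.2 ⟨ht.1, rfl⟩⟩
    _ ≤ ∑ i ∈ range (K + 1), (#s).choose i := card_biUnion_le.trans_eq (by simp)
    _ ≤ ∑ i ∈ range (K + 1), #s ^ i * 1 ^ (K - i) * K.choose i := by
        refine sum_le_sum fun i hi => ?_
        rw [one_pow, mul_one]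
        exact (Nat.choose_le_pow _ _).trans
          (Nat.le_mul_of_pos_right _ (Nat.choose_pos (Nat.lt_succ_iff.1 (mem_range.1 hi))))
    _ = (#s + 1) ^ K := (add_pow _ _ _).symm

lemma natCard_traces_le {Y : Type*} (F : Set (Set Y)) (s : Finset Y) (K : ℕ)
    (hK : ∀ t ⊆ s, Shatters F ↑t → #t ≤ K) :
    Nat.card {S : Set Y | ∃ G ∈ F, G ∩ ↑s = S} ≤ (#s + 1) ^ K := by
  classical
  set 𝒜 : Finset (Finset Y) := {u ∈ s.powerset | ∃ G ∈ F, G ∩ ↑s = ↑u}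
  have htraces : {S : Set Y | ∃ G ∈ F, G ∩ ↑s = S} = (↑) '' (𝒜 : Set (Finset Y)) := by
    ext S
    simp only [Set.mem_ofPred_eq, Set.mem_image, mem_coe, mem_filter, Finset.mem_powerset, 𝒜]
    constructor
    · rintro ⟨G, hG, rfl⟩
      refine ⟨{x ∈ s | x ∈ G}, ⟨Finset.filter_subset _ _, G, hG, ?_⟩, ?_⟩ <;>
        · rw [coe_filter]; ext; simp [and_comm]
    · rintro ⟨u, ⟨-, hu⟩, rfl⟩
      exact hu
  have hshatters : ∀ t ∈ 𝒜.shatterer, t ⊆ s ∧ Shatters F ↑t := by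
    intro t ht
    rw [mem_shatterer] at ht
    obtain ⟨u, hu, htu⟩ := ht.exists_superset
    have hts : t ⊆ s := htu.trans (Finset.mem_powerset.1 (mem_filter.1 hu).1)
    refine ⟨hts, fun B hB => ?_⟩
    obtain ⟨v, hv, htv⟩ := ht (filter_subset (· ∈ B) t)
    obtain ⟨G, hG, hGv⟩ := (mem_filter.1 hv).2
    refine ⟨G, hG, ?_⟩
    rw [← Set.inter_eq_right.2 (coe_subset.2 hts), ← Set.inter_assoc, hGv, ← coe_inter,
      Finset.inter_comm, htv, coe_filter]
    ext x
    exact ⟨fun h => h.2, fun h => ⟨hB h, h⟩⟩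
  calc Nat.card {S : Set Y | ∃ G ∈ F, G ∩ ↑s = S} ≤ #𝒜 := by
        rw [htraces, Nat.card_coe_set_eq, ← Set.ncard_coe_finset 𝒜]
        exact Set.ncard_image_le 𝒜.finite_toSet
    _ ≤ #𝒜.shatterer := card_le_card_shatterer 𝒜
    _ ≤ #{t ∈ s.powerset | #t ≤ K} := card_le_card fun t ht =>
        have ⟨hts, hFt⟩ := hshatters t ht
        mem_filter.2 ⟨Finset.mem_powerset.2 hts, hK t hts hFt⟩
    _ ≤ (#s + 1) ^ K := card_powerset_filter_card_le_le_pow s K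

def toBlocks {X : Type*} {ℓ r : ℕ} (c : Fin r → Fin ℓ) :
    (Fin r → X) ↪ ∀ i, {j // c j = i} → X :=
  ⟨fun b _ j => b j, fun _ _ h => funext fun j => congrFun (congrFun h (c j)) ⟨j, rfl⟩⟩

lemma le_vcell {X : Type*} {ℓ r m : ℕ} {F : Set (Set (Fin r → X))} {𝔸 : Set (Fin r → X)}
    (h𝔸 : IsBoxOfHeight X ℓ r m 𝔸) (hF : Shatters F 𝔸) : (m : ℕ∞) ≤ VCell X ℓ r F :=
  le_sSup ⟨m, rfl, 𝔸, h𝔸, hF⟩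

lemma gridFree_map_toBlocks {X : Type*} {ℓ r d : ℕ} {F : Set (Set (Fin r → X))}
    (hVC : VCell X ℓ r F = d) (hℓ : 0 < ℓ) {c : Fin r → Fin ℓ} (hmono : Monotone c)
    (hsurj : Surjective c) {t : Finset (Fin r → X)} (ht : Shatters F ↑t) :
    GridFree (d + 1) (t.map (toBlocks c)) := by
  intro S hS hSt
  have hbox : IsBoxOfHeight X ℓ r (d + 1) {b | ∀ i, toBlocks c b i ∈ (S i : Set _)} :=
    Or.inr <| Or.inr ⟨hℓ, c, hmono, hsurj, fun i => ↑(S i),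
      fun i => ⟨(S i).finite_toSet, by rw [ncard_coe_finset, hS]⟩, rfl⟩
  have hsub : {b | ∀ i, toBlocks c b i ∈ (S i : Set _)} ⊆ (t : Set (Fin r → X)) := fun b hb => by
    obtain ⟨b', hb', he⟩ := Finset.mem_map.1 (hSt (Fintype.mem_piFinset.2 hb))
    rwa [← (toBlocks c).injective he]
  have := le_vcell hbox (ht.mono hsub)
  rw [hVC] at this
  norm_cast at this
  omega

lemma natCard_traces_le_of_isBoxOfHeight {X : Type u} {ℓ r m d : ℕ} (hℓ : 1 ≤ ℓ)
    {F : Set (Set (Fin r → X))} (hVC : VCell X ℓ r F = d) {𝔸 : Set (Fin r → X)}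
    (h𝔸 : IsBoxOfHeight X ℓ r m 𝔸) {c δ : ℝ} (hc : 0 ≤ c)
    (hgrid : ∀ (γ : Fin ℓ → Type u) (A : ∀ i, Finset (γ i)), (∀ i, #(A i) ≤ m) →
      ∀ D ⊆ piFinset A, GridFree (d + 1) D → (#D : ℝ) ≤ c * (m : ℝ) ^ ((ℓ : ℝ) - δ)) :
    (Nat.card {S : Set (Fin r → X) | ∃ G ∈ F, G ∩ 𝔸 = S} : ℝ) ≤
      ((m : ℝ) ^ ℓ + 1) ^ (c * (m : ℝ) ^ ((ℓ : ℝ) - δ)) := by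
  obtain ⟨hℓ0, cmap, hmono, hsurj, A, hA, rfl⟩ :=
    (h𝔸.resolve_left fun h => by omega).resolve_left fun h => by omega
  set A' : ∀ i, Finset ({j // cmap j = i} → X) := fun i => (hA i).1.toFinset
  have hA' : ∀ i, #(A' i) ≤ m := fun i => by
    rw [← Set.ncard_eq_toFinset_card _ (hA i).1, (hA i).2]
  set e := toBlocks (X := X) cmap
  set s := (piFinset A').preimage e e.injective.injOn
  have hsA : s.map e ⊆ piFinset A' := map_subset_iff_subset_preimage.2 subset_rfl
  have hs : (↑s : Set (Fin r → X)) = {b | ∀ i, (fun j : {j // cmap j = i} => b j.1) ∈ A i} := by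
    ext b
    simp [s, A', e]
    rfl
  have hsm : #s ≤ m ^ ℓ := by
    rw [← card_map e]
    exact (Finset.card_le_card hsA).trans (card_piFinset_le_pow hA')
  have hK : ∀ t ⊆ s, Shatters F ↑t → #t ≤ ⌊c * (m : ℝ) ^ ((ℓ : ℝ) - δ)⌋₊ := fun t hts ht =>
    Nat.le_floor <| by
      rw [← card_map e]
      exact hgrid _ A' hA' _ ((map_subset_map.2 hts).trans hsA)
        (gridFree_map_toBlocks hVC hℓ0 hmono hsurj ht)
  rw [← hs]
  calc (Nat.card {S : Set (Fin r → X) | ∃ G ∈ F, G ∩ ↑s = S} : ℝ)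
      ≤ ((#s + 1) ^ ⌊c * (m : ℝ) ^ ((ℓ : ℝ) - δ)⌋₊ : ℕ) := by
        exact_mod_cast natCard_traces_le F s _ hK
    _ ≤ ((m : ℝ) ^ ℓ + 1) ^ (⌊c * (m : ℝ) ^ ((ℓ : ℝ) - δ)⌋₊ : ℝ) := by
        rw [rpow_natCast]
        push_cast
        gcongr
        exact_mod_cast hsm
    _ ≤ ((m : ℝ) ^ ℓ + 1) ^ (c * (m : ℝ) ^ ((ℓ : ℝ) - δ)) :=
        rpow_le_rpow_of_exponent_le (le_add_of_nonneg_left (by positivity))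
          (Nat.floor_le (by positivity))

theorem statement3_general (ℓ r : ℕ) (hℓ : 1 ≤ ℓ) (d : ℕ) :
    ∃ C ε : ℝ, 0 < ε ∧ ∀ (X : Type u) (F : Set (Set (Fin r → X))),
      VCell X ℓ r F = (d : ℕ∞) →
      ∀ (m : ℕ) (𝔸 : Set (Fin r → X)), IsBoxOfHeight X ℓ r m 𝔸 →
        (Nat.card { S : Set (Fin r → X) | ∃ G ∈ F, G ∩ 𝔸 = S } : ℝ) ≤
          C * 2 ^ ((m : ℝ) ^ ((ℓ : ℝ) - ε)) := by
  obtain ⟨c, δ, hc, hδ, -, hgrid⟩ := exists_card_le_of_gridFree (Nat.succ_ne_zero d) ℓ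
  obtain ⟨C, hC⟩ := exists_pow_add_one_rpow_le_mul_two_rpow ℓ c hδ
  exact ⟨C, δ / 2, half_pos hδ, fun X F hVC m 𝔸 h𝔸 =>
    (natCard_traces_le_of_isBoxOfHeight hℓ hVC h𝔸 hc (hgrid · · m)).trans (hC m)⟩

/-- **Theorem 2.4** (Chernikov–Palacin–Takeuchi, adapted).  Let `1 ≤ ℓ ≤ r`, let `X` be a set
and `F ⊆ P(X^r)`.  If `VC_ℓ(F) = d < ∞`, then there are constants `C = C(d)` and
`ε = ε(d) > 0` such that for all `m`, `π_ℓ(F,m) ≤ C·2^(m^(ℓ-ε))`, i.e. for every `(ℓ,r)`-box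
`𝔸` of height `m`, `|{G ∩ 𝔸 : G ∈ F}| ≤ C·2^(m^(ℓ-ε))`. -/
theorem statement3 (ℓ r : ℕ) (hℓ : 1 ≤ ℓ) (hℓr : ℓ ≤ r) (d : ℕ) :
    ∃ C ε : ℝ, 0 < ε ∧ ∀ (X : Type u) (F : Set (Set (Fin r → X))),
      VCell X ℓ r F = (d : ℕ∞) →
      ∀ (m : ℕ) (𝔸 : Set (Fin r → X)), IsBoxOfHeight X ℓ r m 𝔸 →
        (Nat.card { S : Set (Fin r → X) | ∃ G ∈ F, G ∩ 𝔸 = S } : ℝ) ≤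
          C * 2 ^ ((m : ℝ) ^ ((ℓ : ℝ) - ε)) :=
  statement3_general ℓ r hℓ d

end PaperVC
end

section
/- Let L be a finite relational language, H a hereditary L-property, φ(x̄;ȳ) a quantifier-free L-formula, and ℓ ≥ 0, m ≥ 1 integers. There exists K₀ (depending on φ, ℓ, m) such that for all K ≥ K₀: if 𝔸 is an (ℓ,|ȳ|)-box of height K with |S_φ^H(𝔸)| = 2^{K^ℓ}, then for every sub-box 𝔸′ ⊆ 𝔸 of height m, |S_φ^H(𝔸′)| = 2^{m^ℓ}. -/
open FirstOrder Set Function Filter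

universe u v w

namespace PaperVC

/-- `𝔸` is an `(ℓ,t)`-box of height `K` and `𝔸'` is a sub-box of `𝔸` of height `m`
(with respect to a common decomposition): `𝔸 = A₁⋯A_ℓ`, `𝔸' = A₁'⋯A_ℓ'` with `A_i' ⊆ A_i`.
For `ℓ = 0` the only sub-box of a box is the box itself. -/
def IsSubBoxPair (X : Type*) (ℓ t K m : ℕ) (𝔸 𝔸' : Set (Fin t → X)) : Prop :=
  (ℓ = 0 ∧ 𝔸' = 𝔸 ∧ IsBoxOfHeight X ℓ t K 𝔸) ∨
  (0 < ℓ ∧ ∃ c : Fin t → Fin ℓ, Monotone c ∧ Function.Surjective c ∧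
    ∃ A A' : (i : Fin ℓ) → Set ({j : Fin t // c j = i} → X),
      (∀ i, (A i).Finite ∧ (A i).ncard = K) ∧
      (∀ i, (A' i).Finite ∧ (A' i).ncard = m) ∧
      (∀ i, A' i ⊆ A i) ∧
      𝔸 = { b | ∀ i, (fun j : {j : Fin t // c j = i} => b j.1) ∈ A i } ∧
      𝔸' = { b | ∀ i, (fun j : {j : Fin t // c j = i} => b j.1) ∈ A' i })
/-- The data of a complete equality type in `k` variables over a parameter set contained in `X`:
which pairs of variables are equal, and which variables are equal to which parameters. -/
def EqType (X : Type*) (k : ℕ) :=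
  (Fin k → Fin k → Prop) × (Fin k → X → Prop)

/-- The complete equality type over `A ⊆ X` (whose elements are identified with elements of `W`
via `ι`, assumed injective on `A`) realized by the tuple `u : Fin k → W`. -/
def eqTypeOf {X : Type*} {W : Type*} (A : Set X) (ι : X → W) {k : ℕ} (u : Fin k → W) :
    EqType X k :=
  ⟨fun i j => u i = u j, fun i x => x ∈ A ∧ u i = ι x⟩

/-- `S_k^∅(A)`: the set of complete equality types in `k` variables over `A`; every consistent
such type is realized by a tuple in `X ⊕ Fin k` (with `X` embedded by `Sum.inl`). -/
def EqTypes {X : Type*} (A : Set X) (k : ℕ) : Set (EqType X k) :=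
  Set.range fun u : Fin k → (X ⊕ Fin k) => eqTypeOf A Sum.inl u
/-- The structure induced on `α` by pulling back a structure on `β` along a map `f : α → β`
(for relational languages). -/
noncomputable def pullback {L : FirstOrder.Language.{u, v}} [L.IsRelational]
    {α : Type*} {β : Type*} (f : α → β) (M : L.Structure β) : L.Structure α where
  funMap := fun {_} F _ => isEmptyElim F
  RelMap := fun {_} R x => M.RelMap R (f ∘ x)

/-- A hereditary `L`-property: a family of finite `L`-structures (one set of structures with
universe `Fin n = {1,…,n}` for each `n`), closed under pulling back along arbitrary injections;
this encodes closure under isomorphism and under induced substructures. -/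
structure HerProp (L : FirstOrder.Language.{u, v}) [L.IsRelational] where
  sets : ∀ n : ℕ, Set (L.Structure (Fin n))
  hereditary : ∀ {m n : ℕ} (f : Fin m ↪ Fin n) (M : L.Structure (Fin n)),
    M ∈ sets n → pullback (⇑f) M ∈ sets m

/-- Realization of a first-order formula in a structure given as a term. -/
def realizeIn {L : FirstOrder.Language.{u, v}} {W : Type w} (M : L.Structure W)
    {α : Type*} (φ : L.Formula α) (v : α → W) : Prop :=
  letI := M
  φ.Realize v

/-- The `φ`-type (identified with its positive part, a subset of `𝔸`) of the tuple `a` over the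
set of parameter tuples `𝔸` (transferred into `W` via `ι`), in the structure `M`. -/
def phiTypeOf {L : FirstOrder.Language.{u, v}} {W : Type w} (M : L.Structure W) {s t : ℕ}
    (φ : L.Formula (Fin s ⊕ Fin t)) {X : Type*} (𝔸 : Set (Fin t → X)) (ι : X → W)
    (a : Fin s → W) : Set (Fin t → X) :=
  { b ∈ 𝔸 | realizeIn M φ (Sum.elim a (ι ∘ b)) }

variable {L : FirstOrder.Language.{u, v}} [L.IsRelational]

/-- `S_φ^H(𝔸)`: the set of `φ`-types over `𝔸` (identified with their positive parts)
realized in some member of `H` (the parameters being transferred into the member by an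
injection on the underlying set of `𝔸`). -/
def Sphi (H : HerProp L) {s t : ℕ} (φ : L.Formula (Fin s ⊕ Fin t)) {X : Type*}
    (𝔸 : Set (Fin t → X)) : Set (Set (Fin t → X)) :=
  { q | ∃ n : ℕ, ∃ M ∈ H.sets n, ∃ ι : X → Fin n, Set.InjOn ι (underlying 𝔸) ∧
      ∃ a : Fin s → Fin n, phiTypeOf M φ 𝔸 ι a = q }

/-- `S_{φ,m}^H(𝔸,ρ)`: the set of unions `p₁(x̄₁) ∪ ⋯ ∪ p_m(x̄_m)` (identified with the tuple
`(p₁,…,p_m)` of positive parts of `φ`-types over `𝔸`) realized in some member of `H` by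
pairwise distinct `s`-tuples `ā₁,…,ā_m` such that moreover each pair `(ā_i,ā_j)`, `i ≠ j`,
realizes the equality type `ρ` over the underlying set of `𝔸`. -/
def SphiM (H : HerProp L) {s t : ℕ} (φ : L.Formula (Fin s ⊕ Fin t)) (m : ℕ) {X : Type*}
    (𝔸 : Set (Fin t → X)) (ρ : EqType X (s + s)) : Set (Fin m → Set (Fin t → X)) :=
  { P | ∃ n : ℕ, ∃ M ∈ H.sets n, ∃ ι : X → Fin n, Set.InjOn ι (underlying 𝔸) ∧
      ∃ a : Fin m → Fin s → Fin n, Function.Injective a ∧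
        (∀ i, phiTypeOf M φ 𝔸 ι (a i) = P i) ∧
        (∀ i j, i ≠ j → eqTypeOf (underlying 𝔸) ι (Fin.append (a i) (a j)) = ρ) }

/-- The witness predicate for `VC*_ℓ(φ,H) ≥ m`: there are an `(ℓ,t)`-box `𝔸` of height `m`
and an equality type `ρ ∈ S_{2s}^∅(𝔸)` with `|S_{φ,m}^H(𝔸,ρ)| = 2^(m^(ℓ+1))`. -/
def VCstarWitness (H : HerProp L) (ℓ : ℕ) {s t : ℕ} (φ : L.Formula (Fin s ⊕ Fin t))
    (m : ℕ) : Prop :=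
  ∃ 𝔸 : Set (Fin t → ℕ), IsBoxOfHeight ℕ ℓ t m 𝔸 ∧
    ∃ ρ ∈ EqTypes (underlying 𝔸) (s + s),
      Nat.card (SphiM H φ m 𝔸 ρ) = 2 ^ m ^ (ℓ + 1)

/-- `VC*_ℓ(H)`, as an extended natural number: the supremum over quantifier-free partitioned
formulas `φ(x̄;ȳ)` of `VC*_ℓ(φ,H)`. -/
noncomputable def VCstar (H : HerProp L) (ℓ : ℕ) : ℕ∞ :=
  sSup { N : ℕ∞ | ∃ m : ℕ, N = (m : ℕ∞) ∧ ∃ (s t : ℕ) (φ : L.Formula (Fin s ⊕ Fin t)),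
      φ.IsQF ∧ VCstarWitness H ℓ φ m }

private def boxEquiv {X : Type w} {ℓ t : ℕ} (c : Fin t → Fin ℓ)
    (A : (i : Fin ℓ) → Set ({j : Fin t // c j = i} → X)) :
    { b : Fin t → X // ∀ i, (fun j : {j : Fin t // c j = i} => b j.1) ∈ A i } ≃
    ((i : Fin ℓ) → A i) where
  toFun b i := ⟨fun j => b.1 j.1, b.2 i⟩
  invFun f := ⟨fun j => (f (c j)).1 ⟨j, rfl⟩, fun i => by
    have h : (fun j : {j : Fin t // c j = i} => (f (c j.1)).1 ⟨j.1, rfl⟩) = (f i).1 := by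
      funext j
      obtain ⟨j, hj⟩ := j
      subst hj
      rfl
    show (fun j : {j : Fin t // c j = i} => (f (c j.1)).1 ⟨j.1, rfl⟩) ∈ A i
    rw [h]; exact (f i).2⟩
  left_inv b := rfl
  right_inv f := by
    funext i
    apply Subtype.ext
    funext j
    obtain ⟨j, hj⟩ := j
    subst hj
    rfl

private lemma box_card {X : Type w} {ℓ t n : ℕ} (c : Fin t → Fin ℓ)
    (A : (i : Fin ℓ) → Set ({j : Fin t // c j = i} → X))
    (hA : ∀ i, (A i).Finite ∧ (A i).ncard = n) :
    ({ b : Fin t → X | ∀ i, (fun j : {j : Fin t // c j = i} => b j.1) ∈ A i }).Finite ∧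
    ({ b : Fin t → X | ∀ i, (fun j : {j : Fin t // c j = i} => b j.1) ∈ A i }).ncard = n ^ ℓ := by
  haveI : ∀ i, Finite (A i) := fun i => (hA i).1
  have e := boxEquiv c A
  haveI : Finite { b : Fin t → X | ∀ i, (fun j : {j : Fin t // c j = i} => b j.1) ∈ A i } :=
    Finite.of_equiv _ e.symm
  refine ⟨Set.finite_coe_iff.mp this, ?_⟩
  rw [← Nat.card_coe_set_eq]
  have h1 : Nat.card ({ b : Fin t → X | ∀ i, (fun j : {j : Fin t // c j = i} => b j.1) ∈ A i }) =
      Nat.card ((i : Fin ℓ) → A i) := Nat.card_congr e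
  rw [h1, Nat.card_pi]
  have h2 : ∀ i : Fin ℓ, Nat.card (A i) = n := fun i => by
    rw [Nat.card_coe_set_eq, (hA i).2]
  simp [h2]

private lemma powerset_card {Y : Type*} (S : Set Y) (hS : S.Finite) :
    ({q : Set Y | q ⊆ S}).Finite ∧ ({q : Set Y | q ⊆ S}).ncard = 2 ^ S.ncard := by
  haveI : Finite S := hS
  have e : ({q : Set Y | q ⊆ S} : Set (Set Y)) ≃ Set S :=
    { toFun := fun q => Subtype.val ⁻¹' q.1
      invFun := fun B => ⟨Subtype.val '' B, by rintro _ ⟨b, _, rfl⟩; exact b.2⟩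
      left_inv := fun q => by
        apply Subtype.ext
        show Subtype.val '' (Subtype.val ⁻¹' (q : Set Y)) = (q : Set Y)
        rw [Subtype.image_preimage_coe]
        exact Set.inter_eq_right.mpr q.2
      right_inv := fun B => Set.preimage_image_eq B Subtype.val_injective }
  haveI : Finite ({q : Set Y | q ⊆ S} : Set (Set Y)) := Finite.of_equiv _ e.symm
  refine ⟨Set.finite_coe_iff.mp this, ?_⟩
  have e2 : Set S ≃ (S → Bool) := Equiv.arrowCongr (Equiv.refl _) Equiv.propEquivBool
  have hb : Nat.card Bool = 2 := by simp [Nat.card_eq_fintype_card]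
  rw [← Nat.card_coe_set_eq, Nat.card_congr (e.trans e2), Nat.card_fun, hb,
    Nat.card_coe_set_eq]


/-- **Lemma 3.2(b).**  For every quantifier-free `φ(x̄;ȳ)`, `ℓ ≥ 0` and `m ≥ 1` there is `K₀`
such that for all `K ≥ K₀`: if `𝔸` is an `(ℓ,|ȳ|)`-box of height `K` with
`|S_φ^H(𝔸)| = 2^(K^ℓ)`, then every sub-box `𝔸' ⊆ 𝔸` of height `m` satisfies
`|S_φ^H(𝔸')| = 2^(m^ℓ)`. -/
theorem statement9 {L : FirstOrder.Language.{u, v}} [L.IsRelational]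
    [∀ n, Finite (L.Relations n)] (H : HerProp L) {s t : ℕ}
    (φ : L.Formula (Fin s ⊕ Fin t)) (hφ : φ.IsQF) (ℓ m : ℕ) (hm : 1 ≤ m) :
    ∃ K₀ : ℕ, ∀ K, K₀ ≤ K → ∀ (X : Type w) (𝔸 𝔸' : Set (Fin t → X)),
      IsSubBoxPair X ℓ t K m 𝔸 𝔸' →
      Nat.card (Sphi H φ 𝔸) = 2 ^ K ^ ℓ →
      Nat.card (Sphi H φ 𝔸') = 2 ^ m ^ ℓ := by
  refine ⟨0, fun K _ X 𝔸 𝔸' hbox hcard => ?_⟩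
  rcases hbox with ⟨hl, rfl, _⟩ | ⟨hl, c, hmon, hsurj, A, A', hA, hA', hsub, h𝔸, h𝔸'⟩
  · subst hl; simpa using hcard
  · have h𝔸sub : 𝔸' ⊆ 𝔸 := by
      rw [h𝔸, h𝔸']; intro b hb i; exact hsub i (hb i)
    have hbc := box_card c A hA
    rw [← h𝔸] at hbc
    obtain ⟨hfin, hncard⟩ := hbc
    have hbc' := box_card c A' hA'
    rw [← h𝔸'] at hbc'
    obtain ⟨hfin', hncard'⟩ := hbc'
    have hsp : ∀ (B : Set (Fin t → X)), Sphi H φ B ⊆ {q | q ⊆ B} := by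
      rintro B q ⟨n, M, hM, ι, hι, a, rfl⟩ b hb; exact hb.1
    obtain ⟨hpfin, hpcard⟩ := powerset_card 𝔸 hfin
    obtain ⟨hpfin', hpcard'⟩ := powerset_card 𝔸' hfin'
    have heq : Sphi H φ 𝔸 = {q | q ⊆ 𝔸} := by
      refine Set.eq_of_subset_of_ncard_le (hsp 𝔸) ?_ hpfin
      rw [hpcard, hncard, ← Nat.card_coe_set_eq, hcard]
    have hsup : {q : Set (Fin t → X) | q ⊆ 𝔸'} ⊆ Sphi H φ 𝔸' := by
      intro B hB
      have hB𝔸 : B ∈ Sphi H φ 𝔸 := by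
        rw [heq]; exact fun b hb => h𝔸sub (hB hb)
      obtain ⟨n, M, hM, ι, hι, a, ha⟩ := hB𝔸
      refine ⟨n, M, hM, ι, hι.mono ?_, a, ?_⟩
      · rintro x ⟨b, hb, j, rfl⟩; exact ⟨b, h𝔸sub hb, j, rfl⟩
      · ext b
        constructor
        · rintro ⟨hb', hr⟩
          rw [← ha]; exact ⟨h𝔸sub hb', hr⟩
        · intro hb
          have hb2 := hb
          rw [← ha] at hb2
          exact ⟨hB hb, hb2.2⟩
    have heq' : Sphi H φ 𝔸' = {q | q ⊆ 𝔸'} := subset_antisymm (hsp 𝔸') hsup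
    rw [heq', Nat.card_coe_set_eq, hpcard', hncard']

end PaperVC
end

section
/- Let L be a finite relational language, H a hereditary L-property, φ(x̄;ȳ) a quantifier-free L-formula, ℓ ≥ 1, and N ≥ m ≥ 1 integers. There exists K₀ (depending on φ, ℓ, N, m) such that for all K ≥ K₀: if M is an L-structure, 𝔸 ⊆ M^{|ȳ|} is an (ℓ,|ȳ|)-box of height K with |S_φ^H(𝔸)| = 2^{K^ℓ}, 𝔸′ ⊆ 𝔸 is a sub-box of height m, and 𝔻 ⊆ M^{|x̄|} contains at least one realization of every element of S_φ^H(𝔸), then 𝔻 contains at least N realizations of every element of S_φ^H(𝔸′). -/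
open FirstOrder Set Function Filter

universe u v w

namespace PaperVC

variable {L : FirstOrder.Language.{u, v}} [L.IsRelational]

/-!
Every `φ`-type over the box `𝔸` is a subset of `𝔸`, which has `K ^ ℓ` elements; so
`|S_φ^H(𝔸)| = 2 ^ K ^ ℓ` forces every subset of `𝔸` to be a realized type. Given `q'` over
`𝔸'`, choose `N` parameters `b ∉ 𝔸'` in `𝔸` (there are `K ^ ℓ - m ^ ℓ ≥ N` of them once
`K ≥ N + m`): the realizations in `𝔻` of the types `q' ∪ {b}` are pairwise distinct and all
restrict to `q'` on `𝔸'`.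
-/

section Box

variable {X κ ι : Type*}

def boxProd (c : κ → ι) (A : (i : ι) → Set ({j // c j = i} → X)) : Set (κ → X) :=
  { b | ∀ i, (fun j : {j // c j = i} => b j.1) ∈ A i }

theorem boxProd_mono {c : κ → ι} {A A' : (i : ι) → Set ({j // c j = i} → X)}
    (h : ∀ i, A' i ⊆ A i) : boxProd c A' ⊆ boxProd c A :=
  fun _ hb i => h i (hb i)

def boxProdEquivPi (c : κ → ι) (A : (i : ι) → Set ({j // c j = i} → X)) :
    boxProd c A ≃ ∀ i, A i where
  toFun b i := ⟨fun j => b.1 j.1, b.2 i⟩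
  invFun g := ⟨fun j => (g (c j)).1 ⟨j, rfl⟩, fun i => by
    convert (g i).2 using 1
    funext ⟨j, hj⟩
    subst hj
    rfl⟩
  left_inv _ := rfl
  right_inv g := by
    funext i
    ext ⟨j, hj⟩
    subst hj
    rfl

theorem boxProd_finite [Finite ι] {c : κ → ι} {A : (i : ι) → Set ({j // c j = i} → X)}
    (hA : ∀ i, (A i).Finite) : (boxProd c A).Finite := by
  have := fun i => (hA i).to_subtype
  exact finite_coe_iff.mp (Finite.of_equiv _ (boxProdEquivPi c A).symm)

theorem ncard_boxProd [Fintype ι] {c : κ → ι} {A : (i : ι) → Set ({j // c j = i} → X)}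
    {K : ℕ} (hA : ∀ i, (A i).ncard = K) : (boxProd c A).ncard = K ^ Fintype.card ι := by
  rw [← Nat.card_coe_set_eq, Nat.card_congr (boxProdEquivPi c A), Nat.card_pi]
  simp only [Nat.card_coe_set_eq, hA, Finset.prod_const, Finset.card_univ]

end Box

section SubBoxPair

variable {X : Type*} {ℓ t K m : ℕ} {𝔸 𝔸' : Set (Fin t → X)}

theorem IsSubBoxPair.subset (h : IsSubBoxPair X ℓ t K m 𝔸 𝔸') : 𝔸' ⊆ 𝔸 := by
  rcases h with ⟨-, rfl, -⟩ | ⟨-, c, -, -, A, A', -, -, hA'A, rfl, rfl⟩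
  · exact subset_rfl
  · exact boxProd_mono hA'A

theorem IsSubBoxPair.finite (h : IsSubBoxPair X ℓ t K m 𝔸 𝔸') : 𝔸.Finite := by
  rcases h with ⟨hℓ, -, hbox⟩ | ⟨-, c, -, -, A, A', hA, -, -, rfl, -⟩
  · rcases hbox with ⟨-, -, rfl⟩ | ⟨-, -, b, rfl⟩ | ⟨hℓ', -⟩
    · exact finite_empty
    · exact finite_singleton b
    · omega
  · exact boxProd_finite fun i => (hA i).1

theorem IsSubBoxPair.ncard_eq (h : IsSubBoxPair X ℓ t K m 𝔸 𝔸') (hℓ : 0 < ℓ) :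
    𝔸.ncard = K ^ ℓ ∧ 𝔸'.ncard = m ^ ℓ := by
  rcases h with ⟨hℓ0, -⟩ | ⟨-, c, -, -, A, A', hA, hA', -, rfl, rfl⟩
  · omega
  · exact ⟨(ncard_boxProd fun i => (hA i).2).trans (by rw [Fintype.card_fin]),
      (ncard_boxProd fun i => (hA' i).2).trans (by rw [Fintype.card_fin])⟩

end SubBoxPair

theorem le_pow_sub_pow {N m K ℓ : ℕ} (hℓ : ℓ ≠ 0) (hK : N + m ≤ K) : N ≤ K ^ ℓ - m ^ ℓ := by
  have : N + m ^ ℓ ≤ K ^ ℓ :=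
    calc N + m ^ ℓ ≤ N ^ ℓ + m ^ ℓ := Nat.add_le_add_right (Nat.le_self_pow hℓ N) _
      _ ≤ (N + m) ^ ℓ := pow_add_pow_le (Nat.zero_le N) (Nat.zero_le m) hℓ
      _ ≤ K ^ ℓ := Nat.pow_le_pow_left hK ℓ
  omega

theorem eq_powerset_of_subset_of_ncard {α : Type*} {A : Set α} {F : Set (Set α)}
    (hA : A.Finite) (hF : F ⊆ 𝒫 A) (hcard : F.ncard = 2 ^ A.ncard) : F = 𝒫 A :=
  Set.eq_of_subset_of_ncard_le hF (by rw [ncard_powerset A hA, hcard]) hA.powerset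

theorem exists_injective_inter_eq_of_forall_subset {α β : Type*} (τ : β → Set α)
    {A A' : Set α} {D : Set β} (hA : A.Finite) (hA'A : A' ⊆ A)
    (hD : ∀ q ⊆ A, ∃ d ∈ D, τ d = q) {q' : Set α} (hq' : q' ⊆ A') {N : ℕ}
    (hN : N ≤ (A \ A').ncard) :
    ∃ e : Fin N → β, Injective e ∧ ∀ k, e k ∈ D ∧ τ (e k) ∩ A' = q' := by
  have := (hA.sdiff (t := A')).fintype
  obtain ⟨f⟩ : Nonempty (Fin N ↪ ↥(A \ A')) := by
    apply Function.Embedding.nonempty_of_card_le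
    rwa [Fintype.card_fin, ← Nat.card_eq_fintype_card, Nat.card_coe_set_eq]
  have hqk : ∀ k, insert (f k).1 q' ⊆ A := fun k => insert_subset (f k).2.1 (hq'.trans hA'A)
  choose e heD he using fun k => hD _ (hqk k)
  refine ⟨e, fun k k' hkk' => f.injective (Subtype.ext ?_), fun k => ⟨heD k, ?_⟩⟩
  · have : (f k).1 ∈ insert (f k').1 q' := he k' ▸ hkk' ▸ he k ▸ mem_insert _ _
    exact this.resolve_right fun hq => (f k).2.2 (hq' hq)
  · rw [he k, insert_inter_of_notMem (f k).2.2, inter_eq_left.mpr hq']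

theorem phiTypeOf_subset {L : FirstOrder.Language.{u, v}} {W : Type w} (M : L.Structure W)
    {s t : ℕ} (φ : L.Formula (Fin s ⊕ Fin t)) {X : Type*} (𝔸 : Set (Fin t → X)) (ι : X → W)
    (a : Fin s → W) : phiTypeOf M φ 𝔸 ι a ⊆ 𝔸 :=
  fun _ hb => hb.1

theorem phiTypeOf_eq_inter_of_subset {L : FirstOrder.Language.{u, v}} {W : Type w}
    (M : L.Structure W) {s t : ℕ} (φ : L.Formula (Fin s ⊕ Fin t)) {X : Type*}
    {𝔸 𝔸' : Set (Fin t → X)} (h : 𝔸' ⊆ 𝔸) (ι : X → W) (a : Fin s → W) :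
    phiTypeOf M φ 𝔸' ι a = phiTypeOf M φ 𝔸 ι a ∩ 𝔸' := by
  ext b
  exact ⟨fun ⟨hb, hφ⟩ => ⟨⟨h hb, hφ⟩, hb⟩, fun ⟨⟨_, hφ⟩, hb⟩ => ⟨hb, hφ⟩⟩

theorem Sphi_subset_powerset (H : HerProp L) {s t : ℕ} (φ : L.Formula (Fin s ⊕ Fin t))
    {X : Type*} (𝔸 : Set (Fin t → X)) : Sphi H φ 𝔸 ⊆ 𝒫 𝔸 := by
  rintro _ ⟨n, M, -, ι, -, a, rfl⟩
  exact phiTypeOf_subset M φ 𝔸 ι a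

theorem statement10_general {L : FirstOrder.Language.{u, v}} [L.IsRelational]
    (H : HerProp L) {s t : ℕ}
    (φ : L.Formula (Fin s ⊕ Fin t)) (ℓ N m : ℕ) (hℓ : 1 ≤ ℓ) :
    ∃ K₀ : ℕ, ∀ K, K₀ ≤ K → ∀ (W : Type w) (M : L.Structure W)
      (𝔸 𝔸' : Set (Fin t → W)),
      IsSubBoxPair W ℓ t K m 𝔸 𝔸' →
      Nat.card (Sphi H φ 𝔸) = 2 ^ K ^ ℓ →
      ∀ 𝔻 : Set (Fin s → W),
        (∀ q ∈ Sphi H φ 𝔸, ∃ a ∈ 𝔻, phiTypeOf M φ 𝔸 id a = q) →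
        ∀ q' ∈ Sphi H φ 𝔸', ∃ e : Fin N → (Fin s → W), Function.Injective e ∧
          ∀ k, e k ∈ 𝔻 ∧ phiTypeOf M φ 𝔸' id (e k) = q' := by
  refine ⟨N + m, fun K hK W M 𝔸 𝔸' hbox hcard 𝔻 h𝔻 q' hq' => ?_⟩
  obtain ⟨h𝔸card, h𝔸'card⟩ := hbox.ncard_eq hℓ
  have hall : Sphi H φ 𝔸 = 𝒫 𝔸 :=
    eq_powerset_of_subset_of_ncard hbox.finite (Sphi_subset_powerset H φ 𝔸) <| by
      rw [← Nat.card_coe_set_eq, hcard, h𝔸card]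
  have hN : N ≤ (𝔸 \ 𝔸').ncard := by
    rw [ncard_sdiff hbox.subset (hbox.finite.subset hbox.subset), h𝔸card, h𝔸'card]
    exact le_pow_sub_pow (by omega) hK
  obtain ⟨e, he, heD⟩ := exists_injective_inter_eq_of_forall_subset (phiTypeOf M φ 𝔸 id)
    hbox.finite hbox.subset (fun q hq => h𝔻 q (hall ▸ hq)) (Sphi_subset_powerset H φ 𝔸' hq') hN
  refine ⟨e, he, fun k => ⟨(heD k).1, ?_⟩⟩
  rw [phiTypeOf_eq_inter_of_subset M φ hbox.subset, (heD k).2]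

/-- **Lemma 3.2(c).**  For every quantifier-free `φ(x̄;ȳ)`, `ℓ ≥ 1` and `N ≥ m ≥ 1` there is
`K₀` such that for all `K ≥ K₀`: if `M` is an `L`-structure, `𝔸 ⊆ M^{|ȳ|}` is an
`(ℓ,|ȳ|)`-box of height `K` with `|S_φ^H(𝔸)| = 2^(K^ℓ)`, `𝔸' ⊆ 𝔸` is a sub-box of height
`m`, and `𝔻 ⊆ M^{|x̄|}` contains one realization of every element of `S_φ^H(𝔸)`, then `𝔻`
contains at least `N` realizations of every element of `S_φ^H(𝔸')`. -/
theorem statement10 {L : FirstOrder.Language.{u, v}} [L.IsRelational]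
    [∀ n, Finite (L.Relations n)] (H : HerProp L) {s t : ℕ}
    (φ : L.Formula (Fin s ⊕ Fin t)) (hφ : φ.IsQF) (ℓ N m : ℕ) (hℓ : 1 ≤ ℓ)
    (hm : 1 ≤ m) (hNm : m ≤ N) :
    ∃ K₀ : ℕ, ∀ K, K₀ ≤ K → ∀ (W : Type w) (M : L.Structure W)
      (𝔸 𝔸' : Set (Fin t → W)),
      IsSubBoxPair W ℓ t K m 𝔸 𝔸' →
      Nat.card (Sphi H φ 𝔸) = 2 ^ K ^ ℓ →
      ∀ 𝔻 : Set (Fin s → W),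
        (∀ q ∈ Sphi H φ 𝔸, ∃ a ∈ 𝔻, phiTypeOf M φ 𝔸 id a = q) →
        ∀ q' ∈ Sphi H φ 𝔸', ∃ e : Fin N → (Fin s → W), Function.Injective e ∧
          ∀ k, e k ∈ 𝔻 ∧ phiTypeOf M φ 𝔸' id (e k) = q' :=
  statement10_general H φ ℓ N m hℓ

end PaperVC
end

section
/- Let L be a finite relational language with maximum arity r ≥ 2 and let H be a hereditary L-property with VC*_{r-1}(H) = d < ∞. Then for every formula φ(x;ȳ) ∈ rel(L) with a single object variable x and every sufficiently large n, the family F_φ(n) = { U ⊆ [n]^{1+|ȳ|} : some M ∈ H_n has φ(M) = U } satisfies VC_r(F_φ(n)) ≤ d. -/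
/-!
A shattered `(r, 1+|ȳ|)`-box has at most as many blocks as coordinates, while `1+|ȳ| ≤ r` since
`φ` comes from a relation symbol of arity at most `r`. So every block is a single coordinate and
the box is a product `D₀ × D₁ × ⋯ × D_{r-1}` of `m`-element sets; as `φ(M)` consists of injective
tuples, shattering forces the `Dⱼ` to be pairwise disjoint. Use the `m` elements `aᵢ` of `D₀` as
values of `x`: for any subsets `P₁, …, P_m` of the `(r-1)`-box `D₁ × ⋯ × D_{r-1}`, the set of
tuples `aᵢ ⌢ b̄` with `b̄ ∈ Pᵢ` is cut out by some `φ(M)`, so `M` realizes the `φ`-types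
`P₁, …, P_m` by distinct elements. These `2^(m^r)` families witness `VC*_{r-1}(φ, H) ≥ m`.
-/

open FirstOrder Set Function Filter

universe u v w

namespace PaperVC

variable {L : FirstOrder.Language.{u, v}} [L.IsRelational]

/-- `F_φ(n)` for the formula `φ ∈ rel(L)` encoded by a relation symbol `R` of arity `t'`
together with a surjection `π : Fin t' → Fin s`: the family of all sets
`φ(M) = {w ∈ [n]^s : w injective and R(w∘π) holds}` as `M` ranges over `H_n`. -/
def relFormulaSet (H : HerProp L) (n : ℕ) {t' s : ℕ} (R : L.Relations t')
    (π : Fin t' → Fin s) : Set (Set (Fin s → Fin n)) :=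
  { U | ∃ M ∈ H.sets n, U = { w : Fin s → Fin n |
      Function.Injective w ∧ M.RelMap R (w ∘ π) } }

end PaperVC

open FirstOrder.Language

theorem Fin.sumElim_comp_finSumFinEquiv_symm {α : Type*} {m n : ℕ} (a : Fin m → α)
    (c : Fin n → α) : Sum.elim a c ∘ finSumFinEquiv.symm = Fin.append a c := by
  funext j
  refine Fin.addCases (fun i => ?_) (fun i => ?_) j <;> simp

theorem Fin.append_inj {α : Type*} {m n : ℕ} {a a' : Fin m → α} {c c' : Fin n → α}
    (h : Fin.append a c = Fin.append a' c') : a = a' ∧ c = c' :=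
  ⟨funext fun i => by simpa using congrFun h (Fin.castAdd n i),
    funext fun i => by simpa using congrFun h (Fin.natAdd m i)⟩

theorem Set.ncard_univ_pi {ι : Type*} [Fintype ι] {α : ι → Type*} (s : ∀ i, Set (α i)) :
    (Set.univ.pi s).ncard = ∏ i, (s i).ncard := by
  simp only [← Nat.card_coe_set_eq, Nat.card_congr (Equiv.Set.univPi s), Nat.card_pi]

theorem Set.pairwise_disjoint_of_forall_mem_univ_pi_injective {ι α : Type*} [DecidableEq ι]
    {s : ι → Set α} (hs : ∀ i, (s i).Nonempty) (h : ∀ b ∈ Set.univ.pi s, Injective b) :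
    Pairwise (Disjoint on s) := by
  intro i j hij
  refine Set.disjoint_left.2 fun x hxi hxj => ?_
  choose b hb using hs
  have hmem : update (update b i x) j x ∈ Set.univ.pi s := by
    intro k _
    simp only [update_apply]
    split_ifs with hkj hki
    exacts [hkj ▸ hxj, hki ▸ hxi, hb k]
  exact hij (h _ hmem (by simp [hij]))

namespace PaperVC

theorem Shatters.subset_of_forall_subset {Y : Type*} {F : Set (Set Y)} {A T : Set Y}
    (h : Shatters F A) (hF : ∀ S ∈ F, S ⊆ T) : A ⊆ T := by
  intro a ha
  obtain ⟨S, hS, hSa⟩ := h {a} (Set.singleton_subset_iff.2 ha)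
  exact hF S hS (Set.inter_subset_left (hSa.symm ▸ rfl : a ∈ S ∩ A))

theorem IsBoxOfHeight.le {X : Type*} {ℓ t m : ℕ} {𝔸 : Set (Fin t → X)}
    (h : IsBoxOfHeight X ℓ t m 𝔸) (hℓ : 0 < ℓ) : ℓ ≤ t := by
  rcases h with ⟨rfl, -⟩ | ⟨rfl, -⟩ | ⟨-, c, -, hc, -⟩
  · exact absurd hℓ (lt_irrefl 0)
  · exact absurd hℓ (lt_irrefl 0)
  · simpa using Fintype.card_le_of_surjective c hc

theorem IsBoxOfHeight.exists_eq_univ_pi {X : Type*} {t m : ℕ} {𝔸 : Set (Fin t → X)}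
    (h : IsBoxOfHeight X t t m 𝔸) (ht : 0 < t) :
    ∃ D : Fin t → Set X, (∀ j, (D j).Finite ∧ (D j).ncard = m) ∧ 𝔸 = Set.univ.pi D := by
  rcases h with ⟨rfl, -⟩ | ⟨rfl, -⟩ | ⟨-, c, -, hc, A, hA, rfl⟩
  · exact absurd ht (lt_irrefl 0)
  · exact absurd ht (lt_irrefl 0)
  have hcinj : Injective c := Finite.injective_iff_surjective.2 hc
  have heval : ∀ j, Injective fun f : {j' // c j' = c j} → X => f ⟨j, rfl⟩ :=
    fun j f g hfg => funext fun j' => by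
      obtain rfl : j' = ⟨j, rfl⟩ := Subtype.ext (hcinj j'.2)
      exact hfg
  refine ⟨fun j => (fun f => f ⟨j, rfl⟩) '' A (c j), fun j => ⟨(hA _).1.image _, ?_⟩, ?_⟩
  · rw [Set.ncard_image_of_injective _ (heval j), (hA _).2]
  ext b
  simp only [Set.mem_ofPred_eq, Set.mem_univ_pi]
  refine ⟨fun hb j => ⟨_, hb (c j), rfl⟩, fun hb i => ?_⟩
  obtain ⟨j, rfl⟩ := hc i
  obtain ⟨f, hf, hfj⟩ := hb j
  convert hf using 1
  funext j'
  obtain rfl : j' = ⟨j, rfl⟩ := Subtype.ext (hcinj j'.2)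
  exact hfj.symm

theorem isBoxOfHeight_univ_pi {X : Type*} {t m : ℕ} {D : Fin t → Set X} (ht : 0 < t)
    (hD : ∀ j, (D j).Finite ∧ (D j).ncard = m) : IsBoxOfHeight X t t m (Set.univ.pi D) := by
  have hconst : ∀ i : Fin t, Injective fun x : X => fun _ : {j // id j = i} => x :=
    fun i x y hxy => congrFun hxy ⟨i, rfl⟩
  refine Or.inr (Or.inr ⟨ht, id, monotone_id, surjective_id,
    fun i => (fun x _ => x) '' D i, fun i => ⟨(hD i).1.image _, ?_⟩, ?_⟩)
  · rw [Set.ncard_image_of_injective _ (hconst i), (hD i).2]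
  ext b
  simp only [Set.mem_univ_pi, Set.mem_ofPred_eq, Set.mem_image]
  refine ⟨fun hb i => ⟨b i, hb i, funext fun j => congrArg b j.2.symm⟩, fun hb i => ?_⟩
  obtain ⟨x, hx, hfx⟩ := hb i
  rwa [← congrFun hfx ⟨i, rfl⟩]

theorem eqTypeOf_eq_of_injective {X W : Type*} {A : Set X} {ι : X → W} {k : ℕ}
    {u : Fin k → W} (hu : Injective u) (hA : ∀ i, ∀ x ∈ A, u i ≠ ι x) :
    eqTypeOf A ι u = eqTypeOf A Sum.inl (Sum.inr : Fin k → X ⊕ Fin k) := by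
  refine Prod.ext (funext₂ fun i j => propext ?_) (funext₂ fun i x => propext ?_)
  · exact hu.eq_iff.trans Sum.inr_injective.eq_iff.symm
  · simpa [eqTypeOf] using hA i x

theorem VCstarWitness.le_vcstar {L : FirstOrder.Language} [L.IsRelational] {H : HerProp L}
    {ℓ s t m : ℕ} {φ : L.Formula (Fin s ⊕ Fin t)}
    (hφ : φ.IsQF) (h : VCstarWitness H ℓ φ m) : (m : ℕ∞) ≤ VCstar H ℓ :=
  le_sSup ⟨m, rfl, s, t, φ, hφ, h⟩

theorem relFormulaSet_subset_injective {L : FirstOrder.Language} [L.IsRelational]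
    {H : HerProp L} {n t' s : ℕ} {R : L.Relations t'} {π : Fin t' → Fin s} :
    ∀ S ∈ relFormulaSet H n R π, S ⊆ {w | Injective w} := by
  rintro _ ⟨M, -, rfl⟩ w hw
  exact hw.1

/-- `R(z_{π 1}, …, z_{π t'})`, read as a formula in the object variables `z_1, …, z_s` and the
parameter variables `z_{s+1}, …, z_{s+t}`. -/
def relAtom {L : FirstOrder.Language} {t' s t : ℕ} (R : L.Relations t')
    (π : Fin t' → Fin (s + t)) : L.Formula (Fin s ⊕ Fin t) :=
  R.formula fun l => Term.var (finSumFinEquiv.symm (π l))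

theorem relAtom_isQF {L : FirstOrder.Language} {t' s t : ℕ} (R : L.Relations t')
    (π : Fin t' → Fin (s + t)) : (relAtom R π).IsQF :=
  (BoundedFormula.IsAtomic.rel _ _).isQF

theorem phiTypeOf_relAtom {L : FirstOrder.Language} {W X : Type*} (M : L.Structure W)
    {t' s t : ℕ} (R : L.Relations t') (π : Fin t' → Fin (s + t)) (𝔸 : Set (Fin t → X))
    (ι : X → W) (a : Fin s → W) :
    phiTypeOf M (relAtom R π) 𝔸 ι a = {b ∈ 𝔸 | M.RelMap R (Fin.append a (ι ∘ b) ∘ π)} := by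
  let := M
  ext b
  simp only [phiTypeOf, realizeIn, relAtom, Set.mem_ofPred_eq, Formula.realize_rel,
    Term.realize_var, ← Fin.sumElim_comp_finSumFinEquiv_symm]
  rfl

theorem sphiM_relAtom_eq_univ_pi {L : FirstOrder.Language} [L.IsRelational] {H : HerProp L}
    {n m y t' : ℕ} {R : L.Relations t'} {π : Fin t' → Fin (1 + y)}
    {𝔸 : Set (Fin (1 + y) → Fin n)} {X : Type*} {𝔸' : Set (Fin y → X)} {ι : X → Fin n}
    {x₀ : Fin m → Fin n} (hshat : Shatters (relFormulaSet H n R π) 𝔸)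
    (hι : InjOn ι (underlying 𝔸')) (hx₀ : Injective x₀)
    (hx₀ι : ∀ i, ∀ x ∈ underlying 𝔸', x₀ i ≠ ι x)
    (hmem : ∀ i, ∀ b ∈ 𝔸', Fin.append (fun _ : Fin 1 => x₀ i) (ι ∘ b) ∈ 𝔸) :
    SphiM H (relAtom R π) m 𝔸' (eqTypeOf (underlying 𝔸') Sum.inl Sum.inr) =
      Set.univ.pi fun _ => 𝒫 𝔸' := by
  set join := fun i (b : Fin y → X) => Fin.append (fun _ : Fin 1 => x₀ i) (ι ∘ b)
  have hjoin : ∀ {i i' b b'}, b ∈ 𝔸' → b' ∈ 𝔸' → join i b = join i' b' → i = i' ∧ b = b' := by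
    intro i i' b b' hb hb' h
    obtain ⟨h₁, h₂⟩ := Fin.append_inj h
    exact ⟨hx₀ (congrFun h₁ 0),
      funext fun k => hι ⟨b, hb, k, rfl⟩ ⟨b', hb', k, rfl⟩ (congrFun h₂ k)⟩
  have hinj := hshat.subset_of_forall_subset relFormulaSet_subset_injective
  ext P
  simp only [Set.mem_univ_pi, Set.mem_powerset_iff]
  constructor
  · rintro ⟨_, _, _, _, _, _, _, hP, _⟩ i
    rw [← hP i]
    exact Set.sep_subset _ _
  intro hP
  -- a structure cutting out exactly the joins `x₀ i ⌢ ι ∘ b` with `b ∈ P i` realizes `P`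
  obtain ⟨S, ⟨M, hM, rfl⟩, hS⟩ :=
    hshat {w ∈ 𝔸 | ∃ i, ∃ b ∈ P i, w = join i b} (Set.sep_subset _ _)
  refine ⟨n, M, hM, ι, hι, fun i _ => x₀ i, fun i i' h => hx₀ (congrFun h 0),
    fun i => ?_, fun i i' hii' => ?_⟩
  · rw [phiTypeOf_relAtom]
    ext b
    refine ⟨fun ⟨hb, hR⟩ => ?_, fun hb => ⟨hP i hb, ?_⟩⟩
    · have hbS : join i b ∈ {w | Injective w ∧ M.RelMap R (w ∘ π)} ∩ 𝔸 :=
        ⟨⟨hinj (hmem i b hb), hR⟩, hmem i b hb⟩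
      rw [hS] at hbS
      obtain ⟨-, i', b', hb', h⟩ := hbS
      obtain ⟨rfl, rfl⟩ := hjoin hb (hP i' hb') h
      exact hb'
    · have hbS : join i b ∈ {w | Injective w ∧ M.RelMap R (w ∘ π)} ∩ 𝔸 := by
        rw [hS]
        exact ⟨hmem i b (hP i hb), i, b, hb, rfl⟩
      exact hbS.1.2
  · refine eqTypeOf_eq_of_injective (Fin.append_injective_iff.2 ⟨injective_of_subsingleton _,
      injective_of_subsingleton _, fun _ _ => hx₀.ne hii'⟩) fun p x hx => ?_
    induction p using Fin.addCases <;>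
      simpa only [Fin.append_left, Fin.append_right] using hx₀ι _ x hx

theorem vcstarWitness_relAtom_of_shatters {L : FirstOrder.Language} [L.IsRelational]
    {H : HerProp L} {n m y t' : ℕ} {R : L.Relations t'} {π : Fin t' → Fin (1 + y)}
    {D : Fin (1 + y) → Set (Fin n)} (hm : 0 < m) (hy : 0 < y) (hD : ∀ j, (D j).ncard = m)
    (hdisj : Pairwise (Disjoint on D))
    (hshat : Shatters (relFormulaSet H n R π) (Set.univ.pi D)) :
    VCstarWitness H y (relAtom R π) m := by
  let x₀ : Fin m → Fin n := fun i =>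
    (Finite.equivFinOfCardEq (α := D (Fin.castAdd y 0)) (by rw [Nat.card_coe_set_eq, hD])).symm i
  have hx₀ : Injective x₀ := Subtype.val_injective.comp (Equiv.injective _)
  have hx₀D : ∀ i, x₀ i ∈ D (Fin.castAdd y 0) := fun i => Subtype.prop _
  have : Nonempty (Fin n) := ⟨x₀ ⟨0, hm⟩⟩
  let ι : ℕ → Fin n := invFun Fin.val
  have hι_val : ∀ u, ι u.val = u := leftInverse_invFun Fin.val_injective
  -- `VC*` is defined through boxes in `ℕ`: the parameter box is moved there along `Fin.val`.
  let D' : Fin y → Set ℕ := fun k => Fin.val '' D (Fin.natAdd 1 k)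
  have hD' : ∀ {k x}, x ∈ D' k → ι x ∈ D (Fin.natAdd 1 k) ∧ (ι x).val = x := by
    rintro k _ ⟨u, hu, rfl⟩
    rw [hι_val]
    exact ⟨hu, rfl⟩
  have hunder : ∀ x ∈ underlying (Set.univ.pi D'), ∃ k, x ∈ D' k := by
    rintro x ⟨b, hb, k, rfl⟩
    exact ⟨k, hb k trivial⟩
  have hι : InjOn ι (underlying (Set.univ.pi D')) := by
    intro x hx x' hx' h
    obtain ⟨k, hk⟩ := hunder x hx
    obtain ⟨k', hk'⟩ := hunder x' hx'
    rw [← (hD' hk).2, ← (hD' hk').2, h]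
  have hx₀ι : ∀ i, ∀ x ∈ underlying (Set.univ.pi D'), x₀ i ≠ ι x := by
    intro i x hx h
    obtain ⟨k, hk⟩ := hunder x hx
    have hne : Fin.castAdd y (0 : Fin 1) ≠ Fin.natAdd 1 k := by simp [Fin.ext_iff]; omega
    exact Set.disjoint_left.1 (hdisj hne) (hx₀D i) (h ▸ (hD' hk).1)
  have hmem : ∀ i, ∀ b ∈ Set.univ.pi D',
      Fin.append (fun _ : Fin 1 => x₀ i) (ι ∘ b) ∈ Set.univ.pi D := by
    intro i b hb j _
    induction j using Fin.addCases with
    | left p => simpa [Subsingleton.elim p 0] using hx₀D i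
    | right k => simpa using (hD' (hb k trivial)).1
  have hD'fin : ∀ k, (D' k).Finite := fun k => (Set.toFinite _).image _
  have hD'card : ∀ k, (D' k).ncard = m := fun k => by
    rw [Set.ncard_image_of_injective _ Fin.val_injective, hD]
  refine ⟨Set.univ.pi D', isBoxOfHeight_univ_pi hy fun k => ⟨hD'fin k, hD'card k⟩,
    _, ⟨Sum.inr, rfl⟩, ?_⟩
  rw [sphiM_relAtom_eq_univ_pi hshat hι hx₀ hx₀ι hmem, Nat.card_coe_set_eq, Set.ncard_univ_pi]
  simp [Set.ncard_powerset _ (Set.Finite.pi hD'fin), Set.ncard_univ_pi, hD'card, ← pow_mul,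
    pow_succ]

theorem statement14_general {L : FirstOrder.Language.{u, v}} [L.IsRelational]
    (r : ℕ) (hr : 2 ≤ r)
    (harity : ∀ k, r < k → IsEmpty (L.Relations k))
    (H : HerProp L) (d : ℕ) (hd : VCstar H (r - 1) = (d : ℕ∞))
    {t' y : ℕ} (R : L.Relations t') (π : Fin t' → Fin (1 + y))
    (hπ : Function.Surjective π) :
    ∀ᶠ n : ℕ in atTop, ∀ (m : ℕ) (𝔸 : Set (Fin (1 + y) → Fin n)),
      IsBoxOfHeight (Fin n) r (1 + y) m 𝔸 →
      Shatters (relFormulaSet H n R π) 𝔸 → m ≤ d := by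
  refine Eventually.of_forall fun n m 𝔸 hbox hshat => ?_
  rcases m.eq_zero_or_pos with rfl | hm
  · exact Nat.zero_le d
  have ht'r : t' ≤ r := not_lt.1 fun h => (harity t' h).false R
  have hyt' : 1 + y ≤ t' := by simpa using Fintype.card_le_of_surjective π hπ
  obtain rfl : r = 1 + y := le_antisymm (hbox.le (by omega)) (hyt'.trans ht'r)
  obtain ⟨D, hD, rfl⟩ := hbox.exists_eq_univ_pi (by omega)
  have hdisj := Set.pairwise_disjoint_of_forall_mem_univ_pi_injective
    (fun j => Set.nonempty_of_ncard_ne_zero ((hD j).2 ▸ hm.ne'))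
    (hshat.subset_of_forall_subset relFormulaSet_subset_injective)
  have hw := vcstarWitness_relAtom_of_shatters hm (by omega) (fun j => (hD j).2) hdisj hshat
  rw [Nat.add_sub_cancel_left] at hd
  exact_mod_cast hd ▸ hw.le_vcstar (relAtom_isQF R π)

/-- **From the proof of Theorem 1.3.**  If `L` has maximum arity `r ≥ 2` and
`VC*_{r-1}(H) = d < ∞`, then for every `φ(x;ȳ) ∈ rel(L)` with a single object variable
(encoded by a relation symbol `R` and a surjection `π : Fin t' → Fin (1+|ȳ|)`) and every
sufficiently large `n`, `VC_r(F_φ(n)) ≤ d`: no `(r,1+|ȳ|)`-box of height `> d` in `[n]` is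
shattered by `F_φ(n)`. -/
theorem statement14 {L : FirstOrder.Language.{u, v}} [L.IsRelational]
    [∀ n, Finite (L.Relations n)] (r : ℕ) (hr : 2 ≤ r)
    (harity : ∀ k, r < k → IsEmpty (L.Relations k)) (hmax : Nonempty (L.Relations r))
    (H : HerProp L) (d : ℕ) (hd : VCstar H (r - 1) = (d : ℕ∞))
    {t' y : ℕ} (R : L.Relations t') (π : Fin t' → Fin (1 + y))
    (hπ : Function.Surjective π) :
    ∀ᶠ n : ℕ in atTop, ∀ (m : ℕ) (𝔸 : Set (Fin (1 + y) → Fin n)),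
      IsBoxOfHeight (Fin n) r (1 + y) m 𝔸 →
      Shatters (relFormulaSet H n R π) 𝔸 → m ≤ d :=
  statement14_general r hr harity H d hd R π hπ

end PaperVC
end

section
/- For all sufficiently large n, the number of 3-uniform hypergraphs with vertex set [n] = {1,…,n} in which every pair of distinct vertices is contained in at most one edge is at least 2^{n²/14}. -/
/-!
In a finite abelian group `G`, the 3-subsets with zero sum form a linear triple system: two
distinct points `x, y` lie only in `{x, y, -(x + y)}`. Almost every ordered pair `(x, y)`
spans such a triple and each triple arises from at most nine pairs, so there are at least
`(|G|² - 3|G|) / 9` of them. Every subfamily of a linear triple system is again one, which gives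
`2 ^ ((n² - 3n) / 9) ≥ 2 ^ (n² / 14)` linear triple systems on `Fin n` once `n ≥ 9`.
-/

open Filter

namespace PaperVC

open Finset

section LinearTripleSystem

variable {α : Type*} [DecidableEq α]

def IsLinearTripleSystem (E : Finset (Finset α)) : Prop :=
  (∀ e ∈ E, e.card = 3) ∧ ∀ x y : α, x ≠ y → (E.filter fun e => x ∈ e ∧ y ∈ e).card ≤ 1

lemma IsLinearTripleSystem.mono {E F : Finset (Finset α)} (hF : IsLinearTripleSystem F)
    (hEF : E ⊆ F) : IsLinearTripleSystem E :=
  ⟨fun e he => hF.1 e (hEF he), fun x y hxy =>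
    (card_le_card (filter_subset_filter _ hEF)).trans (hF.2 x y hxy)⟩

end LinearTripleSystem

lemma two_pow_card_le_natCard_of_forall_subset {β : Type*} [Fintype β] {P : Finset β → Prop}
    {F : Finset β} (hP : ∀ E ⊆ F, P E) : 2 ^ F.card ≤ Nat.card {E : Finset β // P E} :=
  calc 2 ^ F.card = Nat.card F.powerset := by rw [Nat.card_eq_finsetCard, card_powerset]
    _ ≤ Nat.card {E : Finset β // P E} :=
      Nat.card_le_card_of_injective (fun E => ⟨E.1, hP _ (mem_powerset.1 E.2)⟩)
        fun _ _ h => Subtype.ext (congrArg (fun E : {E : Finset β // P E} => E.1) h)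

section ZeroSumTriples

variable {G : Type*} [AddCommGroup G] [DecidableEq G]

lemma eq_of_card_eq_three_of_sum_eq_zero {e : Finset G} (he : e.card = 3) (hs : e.sum id = 0)
    {x y : G} (hx : x ∈ e) (hy : y ∈ e) (hxy : x ≠ y) : e = {x, y, -(x + y)} := by
  obtain ⟨z, hz⟩ : ∃ z, (e.erase x).erase y = {z} := by
    rw [← card_eq_one, card_erase_of_mem (mem_erase.2 ⟨hxy.symm, hy⟩), card_erase_of_mem hx, he]
  have hzy : z ≠ y := (mem_erase.1 (hz ▸ mem_singleton_self z)).1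
  have hzx : z ≠ x := (mem_erase.1 (mem_erase.1 (hz ▸ mem_singleton_self z)).2).1
  have he' : e = {x, y, z} := by
    rw [← hz, insert_erase (mem_erase.2 ⟨hxy.symm, hy⟩), insert_erase hx]
  have hsum : x + (y + z) = 0 := by
    rwa [he', sum_insert (by simp [hxy, hzx.symm]), sum_insert (by simp [hzy.symm]),
      sum_singleton] at hs
  rw [he', eq_neg_of_add_eq_zero_left (by rw [← hsum]; abel : z + (x + y) = 0)]

variable [Fintype G]

variable (G) in
def zeroSumTriples : Finset (Finset G) :=
  univ.filter fun e => e.card = 3 ∧ e.sum id = 0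

lemma isLinearTripleSystem_zeroSumTriples : IsLinearTripleSystem (zeroSumTriples G) := by
  have mem : ∀ {e}, e ∈ zeroSumTriples G ↔ e.card = 3 ∧ e.sum id = 0 := by
    simp [zeroSumTriples]
  refine ⟨fun e he => (mem.1 he).1, fun x y hxy => card_le_one.2 fun e₁ h₁ e₂ h₂ => ?_⟩
  rw [mem_filter, mem] at h₁ h₂
  rw [eq_of_card_eq_three_of_sum_eq_zero h₁.1.1 h₁.1.2 h₁.2.1 h₁.2.2 hxy,
    eq_of_card_eq_three_of_sum_eq_zero h₂.1.1 h₂.1.2 h₂.2.1 h₂.2.2 hxy]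

lemma insert_mem_zeroSumTriples {x y : G} (hxy : x ≠ y) (hx : x ≠ -(x + y))
    (hy : y ≠ -(x + y)) : {x, y, -(x + y)} ∈ zeroSumTriples G := by
  have hx' : x ∉ ({y, -(x + y)} : Finset G) := by
    simpa only [mem_insert, mem_singleton, not_or] using ⟨hxy, hx⟩
  have hy' : y ∉ ({-(x + y)} : Finset G) := by simpa only [mem_singleton] using hy
  simp only [zeroSumTriples, mem_filter, mem_univ, true_and]
  rw [card_insert_of_notMem hx', card_insert_of_notMem hy', card_singleton,
    sum_insert hx', sum_insert hy', sum_singleton]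
  simp [← add_assoc]

lemma card_filter_degenerate_le :
    (univ.filter fun p : G × G => p.1 = p.2 ∨ p.1 = -(p.1 + p.2) ∨ p.2 = -(p.1 + p.2)).card ≤
      3 * Fintype.card G := by
  -- a degenerate pair is determined by one of its coordinates in one of three ways
  have h_sub : univ.filter (fun p : G × G => p.1 = p.2 ∨ p.1 = -(p.1 + p.2) ∨ p.2 = -(p.1 + p.2))
      ⊆ (univ.image fun x : G => (x, x)) ∪ (univ.image fun x : G => (x, -(x + x))) ∪
          univ.image fun y : G => (-(y + y), y) := fun p hp => by
    obtain ⟨x, y⟩ := p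
    simp only [mem_filter, mem_univ, true_and] at hp
    simp only [mem_union, mem_image, mem_univ, true_and, Prod.mk.injEq]
    rcases hp with h | h | h
    · exact Or.inl (Or.inl ⟨x, rfl, h⟩)
    · exact Or.inl (Or.inr ⟨x, rfl, by grind⟩)
    · exact Or.inr ⟨y, by grind, rfl⟩
  grw [card_le_card h_sub, card_union_le, card_union_le, card_image_le, card_image_le,
    card_image_le, card_univ]
  omega

lemma card_mul_card_le_nine_mul_card_zeroSumTriples_add :
    Fintype.card G * Fintype.card G ≤ 9 * (zeroSumTriples G).card + 3 * Fintype.card G := by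
  let degenerate : G × G → Prop := fun p => p.1 = p.2 ∨ p.1 = -(p.1 + p.2) ∨ p.2 = -(p.1 + p.2)
  let triple : G × G → Finset G := fun p => {p.1, p.2, -(p.1 + p.2)}
  have h_maps : ∀ p ∈ univ.filter (¬degenerate ·), triple p ∈ zeroSumTriples G := fun p hp => by
    simp only [degenerate, mem_filter, not_or] at hp
    exact insert_mem_zeroSumTriples hp.2.1 hp.2.2.1 hp.2.2.2
  have h_spanning : (univ.filter (¬degenerate ·)).card ≤ 9 * (zeroSumTriples G).card := by
    refine (card_le_mul_card_image (f := triple) _ 9 fun e he => ?_).trans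
      (Nat.mul_le_mul_left 9 (card_le_card fun e he => ?_))
    all_goals obtain ⟨p, hp, rfl⟩ := mem_image.1 he
    · have h_fiber : (univ.filter (¬degenerate ·)).filter (triple · = triple p) ⊆
          triple p ×ˢ triple p := fun q hq => by
        rw [← (mem_filter.1 hq).2]
        exact mem_product.2 ⟨by simp [triple], by simp [triple]⟩
      calc _ ≤ (triple p ×ˢ triple p).card := card_le_card h_fiber
        _ = 9 := by rw [card_product, ((mem_filter.1 (h_maps p hp)).2).1]
    · exact h_maps p hp
  have h_split := card_filter_add_card_filter_not (s := (univ : Finset (G × G))) degenerate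
  rw [card_univ, Fintype.card_prod] at h_split
  have h_degenerate : (univ.filter degenerate).card ≤ 3 * Fintype.card G :=
    card_filter_degenerate_le
  omega

end ZeroSumTriples

/-- **From Example 4.3.**  For all sufficiently large `n`, the number of `3`-uniform
hypergraphs on vertex set `[n]` in which every pair of distinct vertices lies in at most one
edge is at least `2^(n²/14)`. -/
theorem statement15 :
    ∀ᶠ n : ℕ in atTop,
      (2 : ℝ) ^ ((n : ℝ) ^ 2 / 14) ≤
        (Nat.card { E : Finset (Finset (Fin n)) //
          (∀ e ∈ E, e.card = 3) ∧
          ∀ x y : Fin n, x ≠ y → (E.filter fun e => x ∈ e ∧ y ∈ e).card ≤ 1 } : ℝ) := by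
  filter_upwards [eventually_ge_atTop 9] with n hn
  have : NeZero n := ⟨by omega⟩
  have h_triples : n ^ 2 ≤ 14 * (zeroSumTriples (Fin n)).card := by
    have := card_mul_card_le_nine_mul_card_zeroSumTriples_add (G := Fin n)
    rw [Fintype.card_fin] at this
    nlinarith
  have h_count : 2 ^ (zeroSumTriples (Fin n)).card ≤
      Nat.card {E : Finset (Finset (Fin n)) // IsLinearTripleSystem E} :=
    two_pow_card_le_natCard_of_forall_subset fun _ =>
      isLinearTripleSystem_zeroSumTriples.mono
  calc (2 : ℝ) ^ ((n : ℝ) ^ 2 / 14) ≤ (2 : ℝ) ^ ((zeroSumTriples (Fin n)).card : ℝ) := by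
        refine Real.rpow_le_rpow_of_exponent_le one_le_two ?_
        rw [div_le_iff₀' (by norm_num)]
        exact_mod_cast h_triples
    _ ≤ _ := by
        rw [Real.rpow_natCast]
        exact_mod_cast h_count

end PaperVC
end
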